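/- arXiv:1004.4196 — 2 statements merged into one kernel-verified Lean document; each statement's English description precedes it below -/
import Mathlib

section
/- Let G be the display graph of a profile P of unrooted phylogenetic trees, let G' be a legal triangulation of G, and let (T',B) be a clique tree for G'. Suppose v is a leaf vertex of G (a vertex of G arising from identified leaves of input trees), and let U(v) be the union of the bags B(x) over all clique-tree nodes x whose bag contains v. Then for every input tree Tj, U(v) contains at most one internal vertex u of Tj, and any such u is adjacent to v in G. -/
/-- An (unrooted) phylogenetic tree over the label type `𝕃`: a tree whose
leaves are in one-to-one correspondence with the label set `labels ⊆ 𝕃`. -/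
structure PhyloTree (𝕃 : Type) where
  V : Type
  G : SimpleGraph V
  tree : G.IsTree
  labels : Set 𝕃
  lab : labels → V
  inj : Function.Injective lab
  labIsLeaf : ∀ l, ∃! w, G.Adj (lab l) w
  leafIsLab : ∀ v, (∃! w, G.Adj v w) → ∃ l, lab l = v

/-- The vertices of the minimal subtree of `G` connecting the set `S`:
all vertices lying on a path between two vertices of `S`. -/
def connVerts {V : Type} (G : SimpleGraph V) (S : Set V) : Set V :=
  {v | ∃ a ∈ S, ∃ b ∈ S, ∃ p : G.Walk a b, p.IsPath ∧ v ∈ p.support}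

/-- `ψ : A → B` exhibits `GB` as obtained from `GA` by contractions: `ψ` is
surjective, its fibres induce connected subgraphs, and adjacency in `GB` is
exactly adjacency of distinct fibres. -/
def IsContractionMap {A B : Type} (GA : SimpleGraph A) (GB : SimpleGraph B)
    (ψ : A → B) : Prop :=
  Function.Surjective ψ ∧
  (∀ b, (GA.induce (ψ ⁻¹' {b})).Connected) ∧
  (∀ b b', GB.Adj b b' ↔ b ≠ b' ∧ ∃ a a', ψ a = b ∧ ψ a' = b' ∧ GA.Adj a a')

/-- The vertices of `T1` labeled by labels of `T2`. -/
def labeledSet {𝕃 : Type} (T1 T2 : PhyloTree 𝕃) : Set T1.V :=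
  {v | ∃ (l : 𝕃) (_ : l ∈ T2.labels) (h1 : l ∈ T1.labels), T1.lab ⟨l, h1⟩ = v}

/-- `T1` displays `T2`: `T2` is obtained from the subtree of `T1` spanned by
the leaves labeled by `L(T2)` by contracting edges (contractions also account
for suppression of degree-two vertices), preserving labels. -/
def Displays {𝕃 : Type} (T1 T2 : PhyloTree 𝕃) : Prop :=
  T2.labels ⊆ T1.labels ∧
  ∃ ψ : (connVerts T1.G (labeledSet T1 T2)) → T2.V,
    IsContractionMap (T1.G.induce (connVerts T1.G (labeledSet T1 T2))) T2.G ψ ∧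
    ∀ (l : 𝕃) (h2 : l ∈ T2.labels) (h1 : l ∈ T1.labels)
      (hm : T1.lab ⟨l, h1⟩ ∈ connVerts T1.G (labeledSet T1 T2)),
      ψ ⟨T1.lab ⟨l, h1⟩, hm⟩ = T2.lab ⟨l, h2⟩

/-- An embedding function from `T1` to `T2`: a surjective map `φ` from a
subgraph of `T1` (partial map, `none` = outside the domain) to `T2` such that
(EF1) labeled vertices map to vertices with the same label, (EF2) fibres are
connected subgraphs of `T1`, (EF3) each edge of `T2` has a unique preimage
edge in `T1`. -/
structure IsEmbeddingFunction {𝕃 : Type} (T1 T2 : PhyloTree 𝕃)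
    (φ : T1.V → Option T2.V) : Prop where
  surj : ∀ v : T2.V, ∃ u, φ u = some v
  ef1 : ∀ (l : 𝕃) (h1 : l ∈ T1.labels) (v : T2.V), φ (T1.lab ⟨l, h1⟩) = some v →
    ∃ h2 : l ∈ T2.labels, T2.lab ⟨l, h2⟩ = v
  ef2 : ∀ v : T2.V, (T1.G.induce {u | φ u = some v}).Connected
  ef3 : ∀ u v : T2.V, T2.G.Adj u v →
    ∃! e : Sym2 T1.V, e ∈ T1.G.edgeSet ∧
      ∃ u' v', e = s(u', v') ∧ φ u' = some u ∧ φ v' = some v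

/-- A supertree of the profile `P`: a phylogenetic tree on the union of the
label sets. -/
def IsSupertree {𝕃 : Type} {k : ℕ} (P : Fin k → PhyloTree 𝕃)
    (T : PhyloTree 𝕃) : Prop :=
  T.labels = ⋃ i, (P i).labels

/-- A profile is compatible if some supertree displays all of its trees. -/
def Compatible {𝕃 : Type} {k : ℕ} (P : Fin k → PhyloTree 𝕃) : Prop :=
  ∃ T : PhyloTree 𝕃, IsSupertree P T ∧ ∀ i, Displays T (P i)

/-- A graph is chordal if every cycle of length at least four has a chord. -/
def IsChordal {V : Type} (G : SimpleGraph V) : Prop :=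
  ∀ ⦃v : V⦄ (c : G.Walk v v), c.IsCycle → 4 ≤ c.length →
    ∃ u w, u ∈ c.support ∧ w ∈ c.support ∧ G.Adj u w ∧ ¬ c.toSubgraph.Adj u w

/-- A tree decomposition of a graph `G`. -/
structure TreeDecomp {V W : Type} (G : SimpleGraph V) (T : SimpleGraph W)
    (B : W → Set V) : Prop where
  tree : T.IsTree
  vertexCover : ∀ v, ∃ x, v ∈ B x
  edgeCover : ∀ ⦃u v⦄, G.Adj u v → ∃ x, u ∈ B x ∧ v ∈ B x
  coherent : ∀ v, (T.induce {x | v ∈ B x}).Connected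

/-- A maximal clique of `G`. -/
def IsMaxClique {V : Type} (G : SimpleGraph V) (K : Set V) : Prop :=
  G.IsClique K ∧ ∀ K', G.IsClique K' → K ⊆ K' → K' = K

/-- A clique tree of a (chordal) graph `G`: a tree decomposition whose bags
are in one-to-one correspondence with the maximal cliques of `G`. -/
structure IsCliqueTree {V W : Type} (G : SimpleGraph V) (T : SimpleGraph W)
    (B : W → Set V) : Prop where
  decomp : TreeDecomp G T B
  bagMax : ∀ x, IsMaxClique G (B x)
  allMax : ∀ K, IsMaxClique G K → ∃ x, B x = K
  injB : Function.Injective B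

/-- The display graph of the profile `P`, presented abstractly: each input tree
embeds injectively, every vertex and every edge comes from some input tree, and
vertices of distinct input trees are identified exactly when they are leaves
carrying a common label. -/
structure DisplayGraph {𝕃 : Type} {k : ℕ} (P : Fin k → PhyloTree 𝕃) where
  V : Type
  G : SimpleGraph V
  emb : ∀ i, (P i).V → V
  inj : ∀ i, Function.Injective (emb i)
  cover : ∀ v, ∃ i a, emb i a = v
  adj : ∀ u v, G.Adj u v ↔ ∃ i a b, (P i).G.Adj a b ∧ emb i a = u ∧ emb i b = v
  glue : ∀ i j a b, i ≠ j → (emb i a = emb j b ↔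
    ∃ (l : 𝕃) (hi : l ∈ (P i).labels) (hj : l ∈ (P j).labels),
      (P i).lab ⟨l, hi⟩ = a ∧ (P j).lab ⟨l, hj⟩ = b)

variable {𝕃 : Type} {k : ℕ} {P : Fin k → PhyloTree 𝕃}

/-- A vertex of an input tree is labeled (i.e. a leaf of that tree). -/
def PhyloTree.IsLabeledVert (t : PhyloTree 𝕃) (a : t.V) : Prop :=
  ∃ (l : 𝕃) (h : l ∈ t.labels), t.lab ⟨l, h⟩ = a

/-- A leaf vertex of the display graph: a vertex arising from identified
labeled leaves of input trees. -/
def DisplayGraph.IsLeafVertex (D : DisplayGraph P) (v : D.V) : Prop :=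
  ∃ i a, (P i).IsLabeledVert a ∧ D.emb i a = v

/-- An internal edge of the display graph: both endpoints were internal
(non-leaf) vertices in the input tree it originated from. -/
def DisplayGraph.InternalEdge (D : DisplayGraph P) (u v : D.V) : Prop :=
  ∃ i a b, (P i).G.Adj a b ∧ ¬ (P i).IsLabeledVert a ∧ ¬ (P i).IsLabeledVert b ∧
    D.emb i a = u ∧ D.emb i b = v

/-- A non-internal edge of the display graph: in the input tree it originated
from, some endpoint was a leaf. -/
def DisplayGraph.NonInternalEdge (D : DisplayGraph P) (u v : D.V) : Prop :=
  ∃ i a b, (P i).G.Adj a b ∧ ((P i).IsLabeledVert a ∨ (P i).IsLabeledVert b) ∧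
    D.emb i a = u ∧ D.emb i b = v

/-- A legal triangulation of the display graph `D`: a chordal supergraph on
the same vertices such that (LT1) a clique containing an internal edge
contains no other edge of the display graph, and (LT2) fill-in edges join only
internal vertices. -/
structure IsLegalTriangulation (D : DisplayGraph P) (G' : SimpleGraph D.V) :
    Prop where
  le : D.G ≤ G'
  chordal : IsChordal G'
  lt1 : ∀ K : Set D.V, G'.IsClique K → ∀ u v, u ∈ K → v ∈ K →
    D.InternalEdge u v → ∀ a b, a ∈ K → b ∈ K → D.G.Adj a b → s(a, b) = s(u, v)
  lt2 : ∀ u v, G'.Adj u v → ¬ D.G.Adj u v →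
    ¬ D.IsLeafVertex u ∧ ¬ D.IsLeafVertex v

/-!
Two vertices in a common bag are adjacent in `G'`, and by (LT2) an edge of `G'` at a leaf vertex is
an edge of the display graph. Edges of the display graph at an internal vertex of `T_j` come from
`T_j`, so every internal vertex of `T_j` in `U(v)` is a `T_j`-neighbour of the leaf of `T_j` glued
into `v`; a leaf has only one neighbour.
-/

theorem PhyloTree.eq_of_adj_isLabeledVert (t : PhyloTree 𝕃) {a b c : t.V}
    (hc : t.IsLabeledVert c) (ha : t.G.Adj a c) (hb : t.G.Adj b c) : a = b := by
  obtain ⟨l, hl, rfl⟩ := hc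
  obtain ⟨w, -, hw⟩ := t.labIsLeaf ⟨l, hl⟩
  exact (hw a ha.symm).trans (hw b hb.symm).symm

namespace DisplayGraph

variable (D : DisplayGraph P)

theorem isLabeledVert_of_isLeafVertex_emb {j : Fin k} {a : (P j).V}
    (h : D.IsLeafVertex (D.emb j a)) : (P j).IsLabeledVert a := by
  obtain ⟨i, b, hb, he⟩ := h
  rcases eq_or_ne j i with rfl | hji
  · exact D.inj j he ▸ hb
  · obtain ⟨l, hj, -, hl, -⟩ := (D.glue j i a b hji).mp he.symm
    exact ⟨l, hj, hl⟩

theorem exists_adj_emb_of_adj {j : Fin k} {a : (P j).V} {w : D.V}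
    (ha : ¬ (P j).IsLabeledVert a) (h : D.G.Adj (D.emb j a) w) :
    ∃ c, (P j).G.Adj a c ∧ D.emb j c = w := by
  obtain ⟨i, a', b', hab, ha', hb'⟩ := (D.adj _ _).mp h
  rcases eq_or_ne i j with rfl | hij
  · exact ⟨b', D.inj i ha' ▸ hab, hb'⟩
  · obtain ⟨l, -, hj, -, hl⟩ := (D.glue i j a' a hij).mp ha'
    exact absurd ⟨l, hj, hl⟩ ha

end DisplayGraph

theorem IsLegalTriangulation.adj_of_isLeafVertex {D : DisplayGraph P} {G' : SimpleGraph D.V}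
    (hG' : IsLegalTriangulation D G') {u v : D.V} (h : G'.Adj u v) (hv : D.IsLeafVertex v) :
    D.G.Adj u v := by
  by_contra hnot
  exact (hG'.lt2 u v h hnot).2 hv

/-- Let `G'` be a legal triangulation of the display graph with clique tree
`(T', B)`, and let `v` be a leaf vertex of the display graph.  Let `U(v)` be
the union of the bags containing `v`.  Then `U(v)` contains at most one
internal vertex of each input tree `T_j`, and any such internal vertex is
adjacent to `v` in the display graph. -/
theorem leaf_bag_union_internal {𝕃 : Type} {k : ℕ} {P : Fin k → PhyloTree 𝕃}
    (D : DisplayGraph P) (G' : SimpleGraph D.V)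
    (hG' : IsLegalTriangulation D G') {W : Type} (T' : SimpleGraph W)
    (B : W → Set D.V) (hct : IsCliqueTree G' T' B)
    (v : D.V) (hv : D.IsLeafVertex v)
    (U : Set D.V) (hU : U = {w | ∃ x, v ∈ B x ∧ w ∈ B x}) :
    ∀ j : Fin k,
      (∀ a b : (P j).V, ¬ (P j).IsLabeledVert a → ¬ (P j).IsLabeledVert b →
        D.emb j a ∈ U → D.emb j b ∈ U → a = b) ∧
      (∀ a : (P j).V, ¬ (P j).IsLabeledVert a → D.emb j a ∈ U →
        D.G.Adj (D.emb j a) v) := by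
  subst hU
  intro j
  have hadj : ∀ a : (P j).V, ¬ (P j).IsLabeledVert a →
      D.emb j a ∈ {w | ∃ x, v ∈ B x ∧ w ∈ B x} → D.G.Adj (D.emb j a) v := by
    rintro a ha ⟨x, hvx, hax⟩
    have hne : D.emb j a ≠ v := fun h => ha (D.isLabeledVert_of_isLeafVertex_emb (h ▸ hv))
    exact hG'.adj_of_isLeafVertex ((hct.bagMax x).1 hax hvx hne) hv
  refine ⟨fun a b ha hb haU hbU => ?_, hadj⟩
  obtain ⟨c, hac, hcv⟩ := D.exists_adj_emb_of_adj ha (hadj a ha haU)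
  obtain ⟨c', hbc', hc'v⟩ := D.exists_adj_emb_of_adj hb (hadj b hb hbU)
  obtain rfl : c' = c := D.inj j (hc'v.trans hcv.symm)
  exact (P j).eq_of_adj_isLabeledVert (D.isLabeledVert_of_isLeafVertex_emb (hcv ▸ hv)) hac hbc'
end

section
/- Let G be the display graph of a profile P, let G' be a legal triangulation of G, and let (T',B) be a clique tree for G'. Suppose e = {u,v} is an internal edge from input tree Ti. Let U(e) be the union of the bags B(x) over all clique-tree nodes x whose bag contains both u and v. Then: (i) for every j ≠ i, U(e) contains at most one vertex of Tj; and (ii) the intersection of U(e) with the vertices of Ti is exactly {u,v}. -/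
variable {𝕃 : Type} {k : ℕ} {P : Fin k → PhyloTree 𝕃}

/-!
A legal triangulation adds no fill-in edge between two vertices of one input tree `Tᵢ`.
Otherwise pick such an edge `wz` with `w, z` closest in `Tᵢ`. At distance two, the triangle
`w m z` contains the internal edge `wm` and the edge `mz`, against (LT1). At larger distance,
the shortest `Tᵢ`-path from `w` to `z` closes up with `wz` to a cycle of length at least four,
whose chord is, by minimality, an edge of the display graph; but on a shortest path such an
edge joins consecutive vertices (an edge of `Tᵢ`) or two leaves of `Tᵢ` (an edge of another
tree), and an inner vertex of a path is not a leaf.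

Consequently a bag containing `u` and `v` contains, by (LT1), no two vertices of a single input
tree other than `u, v` themselves, which gives (ii), and (i) for one bag. Between two bags that
contain `u, v`, walk along the clique tree: every bag on the way contains `u, v`, and the
intersection of two adjacent bags separates the graph, so the image of the `Tⱼ`-path joining
the two vertices of `Tⱼ` meets it, and the one-bag statement propagates.
-/

open SimpleGraph

namespace SimpleGraph

variable {V : Type*} {G : SimpleGraph V}

theorem Preconnected.reachable_deleteEdges_or (hG : G.Preconnected) (x r w : V) :
    (G.deleteEdges {s(x, r)}).Reachable x w ∨ (G.deleteEdges {s(x, r)}).Reachable r w := by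
  suffices ∀ {a b : V} (ρ : G.Walk a b),
      (G.deleteEdges {s(x, r)}).Reachable x a ∨ (G.deleteEdges {s(x, r)}).Reachable r a →
      (G.deleteEdges {s(x, r)}).Reachable x b ∨ (G.deleteEdges {s(x, r)}).Reachable r b from
    this (hG x w).some (.inl .rfl)
  intro a b ρ
  induction ρ with
  | nil => exact id
  | @cons a a' b haa' ρ ih =>
    intro ha
    apply ih
    by_cases he : s(a, a') = s(x, r)
    · rcases Sym2.eq_iff.mp he with ⟨-, rfl⟩ | ⟨-, rfl⟩
      exacts [.inr .rfl, .inl .rfl]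
    · have hadj : (G.deleteEdges {s(x, r)}).Adj a a' := deleteEdges_adj.mpr ⟨haa', he⟩
      exact ha.imp (·.trans hadj.reachable) (·.trans hadj.reachable)

theorem IsAcyclic.mem_of_induce_preconnected (hG : G.IsAcyclic) {S : Set V}
    (hS : (G.induce S).Preconnected) {x r w₁ w₂ : V} (hxr : G.Adj x r)
    (h₁ : (G.deleteEdges {s(x, r)}).Reachable x w₁)
    (h₂ : (G.deleteEdges {s(x, r)}).Reachable r w₂) (hw₁ : w₁ ∈ S) (hw₂ : w₂ ∈ S) :
    x ∈ S ∧ r ∈ S := by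
  obtain ⟨q⟩ := hS ⟨w₁, hw₁⟩ ⟨w₂, hw₂⟩
  let q' := q.map (Embedding.induce S).toHom
  have hq' : ∀ y ∈ q'.support, y ∈ S := by
    intro y hy
    rw [Walk.support_map, List.mem_map] at hy
    obtain ⟨⟨y, hy⟩, -, rfl⟩ := hy
    exact hy
  by_cases he : s(x, r) ∈ q'.edges
  · exact ⟨hq' _ (q'.fst_mem_support_of_mem_edges he),
      hq' _ (q'.snd_mem_support_of_mem_edges he)⟩
  · exact absurd (h₁.trans ((q'.toDeleteEdge _ he).reachable.trans h₂.symm))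
      (isBridge_iff.mp (isAcyclic_iff_forall_isBridge.mp hG hxr))

theorem Walk.dist_getVert_getVert {u v : V} {p : G.Walk u v} (hp : p.length = G.dist u v)
    {m n : ℕ} (hmn : m ≤ n) (hn : n ≤ p.length) :
    G.dist (p.getVert m) (p.getVert n) = n - m := by
  have h := length_eq_dist_of_subwalk hp
    ((isSubwalk_take (p.drop m) (n - m)).trans (isSubwalk_drop p m))
  simp only [take_length, drop_length] at h
  rw [drop_getVert, Nat.add_sub_cancel' hmn] at h
  omega

end SimpleGraph

namespace TreeDecomp

variable {V W : Type} {G : SimpleGraph V} {T : SimpleGraph W} {B : W → Set V}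

theorem mem_inter_of_reachable_deleteEdges (hB : TreeDecomp G T B) {x r w₁ w₂ : W}
    (hxr : T.Adj x r) (h₁ : (T.deleteEdges {s(x, r)}).Reachable x w₁)
    (h₂ : (T.deleteEdges {s(x, r)}).Reachable r w₂) {v : V} (hv₁ : v ∈ B w₁)
    (hv₂ : v ∈ B w₂) : v ∈ B x ∧ v ∈ B r :=
  hB.tree.isAcyclic.mem_of_induce_preconnected (hB.coherent v).preconnected hxr h₁ h₂
    hv₁ hv₂

theorem exists_mem_support_mem_inter (hB : TreeDecomp G T B) {x r : W} (hxr : T.Adj x r)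
    {a b : V} (ρ : G.Walk a b) {w₁ w₂ : W} (h₁ : (T.deleteEdges {s(x, r)}).Reachable x w₁)
    (h₂ : (T.deleteEdges {s(x, r)}).Reachable r w₂) (ha : a ∈ B w₁) (hb : b ∈ B w₂) :
    ∃ c ∈ ρ.support, c ∈ B x ∧ c ∈ B r := by
  induction ρ generalizing w₁ with
  | nil =>
    exact ⟨_, List.mem_singleton_self _,
      hB.mem_inter_of_reachable_deleteEdges hxr h₁ h₂ ha hb⟩
  | @cons a a' b haa' ρ ih =>
    obtain ⟨w, haw, ha'w⟩ := hB.edgeCover haa'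
    rcases hB.tree.connected.preconnected.reachable_deleteEdges_or x r w with hw | hw
    · obtain ⟨c, hc, hcx⟩ := ih hw ha'w hb
      exact ⟨c, by simp [hc], hcx⟩
    · exact ⟨a, by simp, hB.mem_inter_of_reachable_deleteEdges hxr h₁ hw ha haw⟩

theorem eq_of_mem_bags (hB : TreeDecomp G T B) {α : Type} {H : SimpleGraph α}
    (hH : H.Preconnected) (f : H →g G) {K : Set V}
    (hK : ∀ x, K ⊆ B x → ∀ a b, f a ∈ B x → f b ∈ B x → a = b) {x y : W}
    (hx : K ⊆ B x) (hy : K ⊆ B y) {a b : α} (ha : f a ∈ B x) (hb : f b ∈ B y) : a = b := by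
  obtain ⟨π, hπ, -⟩ := hB.tree.existsUnique_path x y
  induction π generalizing a with
  | nil => exact hK _ hx a b ha hb
  | @cons x r y hxr π ih =>
    rw [Walk.cons_isPath_iff] at hπ
    have hry : (T.deleteEdges {s(x, r)}).Reachable r y :=
      (π.toDeleteEdge _ fun he => hπ.2 (π.fst_mem_support_of_mem_edges he)).reachable
    have hr : K ⊆ B r := fun v hv =>
      (hB.mem_inter_of_reachable_deleteEdges hxr .rfl hry (hx hv) (hy hv)).2
    obtain ⟨_, hc, hcx, hcr⟩ :=
      hB.exists_mem_support_mem_inter hxr ((hH a b).some.map f) .rfl hry ha hb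
    rw [Walk.support_map, List.mem_map] at hc
    obtain ⟨c, -, rfl⟩ := hc
    exact (hK x hx a c ha hcx).trans (ih hr hy hcr hb hπ.1)

end TreeDecomp

theorem PhyloTree.not_isLabeledVert_of_adj_of_adj (t : PhyloTree 𝕃) {a b c : t.V}
    (hab : t.G.Adj a b) (hac : t.G.Adj a c) (hbc : b ≠ c) : ¬ t.IsLabeledVert a := by
  rintro ⟨l, hl, rfl⟩
  exact hbc ((t.labIsLeaf ⟨l, hl⟩).unique hab hac)

theorem PhyloTree.not_isLabeledVert_getVert (t : PhyloTree 𝕃) {a b : t.V} {p : t.G.Walk a b}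
    (hp : p.IsPath) {m : ℕ} (h0 : 0 < m) (hm : m < p.length) :
    ¬ t.IsLabeledVert (p.getVert m) := by
  obtain ⟨n, rfl⟩ : ∃ n, m = n + 1 := ⟨m - 1, by omega⟩
  refine t.not_isLabeledVert_of_adj_of_adj (p.adj_getVert_succ (by omega)).symm
    (p.adj_getVert_succ hm) fun h => ?_
  have := hp.getVert_injOn (by simp only [Set.mem_ofPred_eq]; omega)
    (by simp only [Set.mem_ofPred_eq]; omega) h
  omega

namespace DisplayGraph

variable (D : DisplayGraph P)

theorem adj_emb {i : Fin k} {a b : (P i).V} (h : (P i).G.Adj a b) :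
    D.G.Adj (D.emb i a) (D.emb i b) :=
  (D.adj _ _).mpr ⟨i, a, b, h, rfl, rfl⟩

def embHom (i : Fin k) : (P i).G →g D.G := ⟨D.emb i, D.adj_emb⟩

variable {D}

theorem isLabeledVert_of_emb_eq {i j : Fin k} (hij : i ≠ j) {a : (P i).V} {b : (P j).V}
    (h : D.emb i a = D.emb j b) : (P j).IsLabeledVert b := by
  obtain ⟨l, -, hj, -, hb⟩ := (D.glue i j a b hij).mp h
  exact ⟨l, hj, hb⟩

theorem adj_or_isLabeledVert_of_adj_emb {i : Fin k} {a b : (P i).V}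
    (h : D.G.Adj (D.emb i a) (D.emb i b)) :
    (P i).G.Adj a b ∨ (P i).IsLabeledVert a ∧ (P i).IsLabeledVert b := by
  obtain ⟨j, a', b', hab', ha, hb⟩ := (D.adj _ _).mp h
  by_cases hji : j = i
  · subst hji
    exact .inl (D.inj j ha ▸ D.inj j hb ▸ hab')
  · exact .inr ⟨isLabeledVert_of_emb_eq hji ha, isLabeledVert_of_emb_eq hji hb⟩

theorem eq_succ_of_adj_emb_getVert {i : Fin k} {w z : (P i).V} {p : (P i).G.Walk w z}
    (hp : p.length = (P i).G.dist w z) {m n : ℕ} (hmn : m < n) (hn : n ≤ p.length)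
    (hinner : 0 < m ∨ n < p.length)
    (h : D.G.Adj (D.emb i (p.getVert m)) (D.emb i (p.getVert n))) : n = m + 1 := by
  have hpath := p.isPath_of_length_eq_dist hp
  rcases adj_or_isLabeledVert_of_adj_emb h with hadj | ⟨hm, hn'⟩
  · have := Walk.dist_getVert_getVert hp hmn.le hn
    rw [dist_eq_one_iff_adj.mpr hadj] at this
    omega
  · rcases hinner with h0 | hlt
    · exact absurd hm ((P i).not_isLabeledVert_getVert hpath h0 (by omega))
    · exact absurd hn' ((P i).not_isLabeledVert_getVert hpath (by omega) hlt)

end DisplayGraph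

namespace IsLegalTriangulation

variable {D : DisplayGraph P} {G' : SimpleGraph D.V}

theorem not_adj_emb_of_adj_of_adj (hG' : IsLegalTriangulation D G') {i : Fin k}
    {w m z : (P i).V} (hwm : (P i).G.Adj w m) (hmz : (P i).G.Adj m z) (hwz : w ≠ z)
    (hw : ¬ (P i).IsLabeledVert w) : ¬ G'.Adj (D.emb i w) (D.emb i z) := by
  intro h
  have hm : ¬ (P i).IsLabeledVert m := (P i).not_isLabeledVert_of_adj_of_adj hwm.symm hmz hwz
  have hK : G'.IsClique {D.emb i w, D.emb i m, D.emb i z} :=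
    isClique_insert.mpr ⟨isClique_pair.mpr fun _ => hG'.le (D.adj_emb hmz), by
      rintro _ (rfl | rfl) -
      exacts [hG'.le (D.adj_emb hwm), h]⟩
  have := hG'.lt1 _ hK _ _ (by simp) (by simp) ⟨i, w, m, hwm, hw, hm, rfl, rfl⟩ _ _
    (by simp) (by simp) (D.adj_emb hmz)
  rcases Sym2.eq_iff.mp this with ⟨h1, -⟩ | ⟨-, h2⟩
  · exact hwm.ne (D.inj i h1).symm
  · exact hwz (D.inj i h2).symm

theorem not_adj_emb_of_length_eq_dist (hG' : IsLegalTriangulation D G') {i : Fin k}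
    {w z : (P i).V} {p : (P i).G.Walk w z} (hp : p.length = (P i).G.dist w z)
    (h3 : 3 ≤ p.length)
    (hshorter : ∀ s t, (P i).G.dist s t < p.length →
      G'.Adj (D.emb i s) (D.emb i t) → D.G.Adj (D.emb i s) (D.emb i t)) :
    ¬ G'.Adj (D.emb i w) (D.emb i z) := by
  intro h
  set f : (P i).G →g G' := (Hom.ofLE hG'.le).comp (D.embHom i)
  have hf : Function.Injective f := D.inj i
  have hzw : G'.Adj (f z) (f w) := h.symm
  set c := Walk.cons hzw (p.map f) with hc_def
  have hc : c.IsCycle := by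
    refine (Walk.cons_isCycle_iff _ _).mpr
      ⟨(p.isPath_of_length_eq_dist hp).map hf, fun hmem => ?_⟩
    simp only [Walk.edges_map] at hmem
    rw [← Sym2.map_mk, List.mem_map_of_injective (Sym2.map.injective hf)] at hmem
    have := dist_eq_one_iff_adj.mpr (p.adj_of_mem_edges hmem).symm
    omega
  have hlen : c.length = p.length + 1 := by simp [hc_def]
  have hsupp : ∀ y ∈ c.support, ∃ m ≤ p.length, f (p.getVert m) = y := by
    intro y hy
    rw [hc_def, Walk.support_cons, List.mem_cons, Walk.support_map, List.mem_map] at hy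
    rcases hy with rfl | ⟨a, ha, rfl⟩
    · exact ⟨p.length, le_rfl, by rw [Walk.getVert_length]⟩
    · obtain ⟨m, rfl, hm⟩ := Walk.mem_support_iff_exists_getVert.mp ha
      exact ⟨m, hm, rfl⟩
  obtain ⟨a, b, ha, hb, hab, hchord⟩ := hG'.chordal c hc (by omega)
  obtain ⟨m, hm, rfl⟩ := hsupp a ha
  obtain ⟨n, hn, rfl⟩ := hsupp b hb
  clear ha hb hsupp
  have hmn : m ≠ n := by
    rintro rfl
    exact hab.ne rfl
  wlog hlt : m < n generalizing m n
  · exact this n hn m hm hab.symm (fun h' => hchord h'.symm) hmn.symm (by omega)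
  by_cases hinner : 0 < m ∨ n < p.length
  · have hdist := Walk.dist_getVert_getVert hp hlt.le hn
    obtain rfl := D.eq_succ_of_adj_emb_getVert hp hlt hn hinner (hshorter _ _ (by omega) hab)
    refine hchord ?_
    simpa [hc_def, Walk.getVert_map] using c.toSubgraph_adj_getVert (i := m + 1) (by omega)
  · obtain ⟨rfl, rfl⟩ : m = 0 ∧ n = p.length := by omega
    exact hchord (by simp [hc_def])

theorem adj_of_adj_emb (hG' : IsLegalTriangulation D G') {i : Fin k} {w z : (P i).V}
    (h : G'.Adj (D.emb i w) (D.emb i z)) : D.G.Adj (D.emb i w) (D.emb i z) := by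
  induction hd : (P i).G.dist w z using Nat.strong_induction_on generalizing w z with
  | _ d ih =>
    by_contra hD
    obtain ⟨p, hp⟩ := (P i).tree.connected.exists_walk_length_eq_dist w z
    have hwz : w ≠ z := by
      rintro rfl
      exact h.ne rfl
    have h0 : (P i).G.dist w z ≠ 0 := fun h0 => hwz ((P i).tree.connected.dist_eq_zero_iff.mp h0)
    have h1 : (P i).G.dist w z ≠ 1 := fun h1 => hD (D.adj_emb (dist_eq_one_iff_adj.mp h1))
    rcases (show p.length = 2 ∨ 3 ≤ p.length by omega) with h2 | h3
    · have hw : ¬ (P i).IsLabeledVert w := fun hl => (hG'.lt2 _ _ h hD).1 ⟨i, w, hl, rfl⟩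
      have hwm := p.adj_getVert_succ (i := 0) (by omega)
      have hmz := p.adj_getVert_succ (i := 1) (by omega)
      rw [Walk.getVert_zero] at hwm
      rw [show 1 + 1 = p.length by omega, Walk.getVert_length] at hmz
      exact hG'.not_adj_emb_of_adj_of_adj hwm hmz hwz hw h
    · exact hG'.not_adj_emb_of_length_eq_dist hp h3
        (fun s t hst hst' => ih _ (by omega) hst' rfl) h

theorem emb_eq_of_mem_clique (hG' : IsLegalTriangulation D G') {K : Set D.V}
    (hK : G'.IsClique K) {i : Fin k} {u v : (P i).V} (he : (P i).G.Adj u v)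
    (hu : ¬ (P i).IsLabeledVert u) (hv : ¬ (P i).IsLabeledVert v)
    (huK : D.emb i u ∈ K) (hvK : D.emb i v ∈ K) {j : Fin k} {a b : (P j).V} (hab : a ≠ b)
    (haK : D.emb j a ∈ K) (hbK : D.emb j b ∈ K) :
    s(D.emb j a, D.emb j b) = s(D.emb i u, D.emb i v) :=
  hG'.lt1 K hK _ _ huK hvK ⟨i, u, v, he, hu, hv, rfl, rfl⟩ _ _ haK hbK
    (hG'.adj_of_adj_emb (hK haK hbK ((D.inj j).ne hab)))

theorem eq_of_mem_clique_of_ne (hG' : IsLegalTriangulation D G') {K : Set D.V}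
    (hK : G'.IsClique K) {i : Fin k} {u v : (P i).V} (he : (P i).G.Adj u v)
    (hu : ¬ (P i).IsLabeledVert u) (hv : ¬ (P i).IsLabeledVert v)
    (huK : D.emb i u ∈ K) (hvK : D.emb i v ∈ K) {j : Fin k} (hji : j ≠ i) {a b : (P j).V}
    (haK : D.emb j a ∈ K) (hbK : D.emb j b ∈ K) : a = b := by
  by_contra hab
  rcases Sym2.eq_iff.mp (hG'.emb_eq_of_mem_clique hK he hu hv huK hvK hab haK hbK) with
    ⟨h, -⟩ | ⟨h, -⟩
  exacts [hu (D.isLabeledVert_of_emb_eq hji h), hv (D.isLabeledVert_of_emb_eq hji h)]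

theorem eq_or_eq_of_mem_clique (hG' : IsLegalTriangulation D G') {K : Set D.V}
    (hK : G'.IsClique K) {i : Fin k} {u v : (P i).V} (he : (P i).G.Adj u v)
    (hu : ¬ (P i).IsLabeledVert u) (hv : ¬ (P i).IsLabeledVert v)
    (huK : D.emb i u ∈ K) (hvK : D.emb i v ∈ K) {a : (P i).V} (haK : D.emb i a ∈ K) :
    a = u ∨ a = v := by
  by_cases hau : a = u
  · exact .inl hau
  rcases Sym2.eq_iff.mp (hG'.emb_eq_of_mem_clique hK he hu hv huK hvK hau haK huK) with
    ⟨h, -⟩ | ⟨h, -⟩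
  exacts [.inl (D.inj i h), .inr (D.inj i h)]

end IsLegalTriangulation

/-- Let `G'` be a legal triangulation of the display graph with clique tree
`(T', B)`, and let `e = {u,v}` be an internal edge of input tree `T_i`.  Let
`U(e)` be the union of the bags containing both endpoints of `e`.  Then
(i) for every `j ≠ i`, `U(e)` contains at most one vertex of `T_j`, and
(ii) the vertices of `T_i` in `U(e)` are exactly `u` and `v`. -/
theorem internal_edge_bag_union {𝕃 : Type} {k : ℕ} {P : Fin k → PhyloTree 𝕃}
    (D : DisplayGraph P) (G' : SimpleGraph D.V)
    (hG' : IsLegalTriangulation D G') {W : Type} (T' : SimpleGraph W)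
    (B : W → Set D.V) (hct : IsCliqueTree G' T' B)
    (i : Fin k) (u v : (P i).V) (he : (P i).G.Adj u v)
    (hu : ¬ (P i).IsLabeledVert u) (hv : ¬ (P i).IsLabeledVert v)
    (U : Set D.V)
    (hU : U = {w | ∃ x, D.emb i u ∈ B x ∧ D.emb i v ∈ B x ∧ w ∈ B x}) :
    (∀ j : Fin k, j ≠ i →
      ∀ a b : (P j).V, D.emb j a ∈ U → D.emb j b ∈ U → a = b) ∧
    (∀ a : (P i).V, D.emb i a ∈ U ↔ (a = u ∨ a = v)) := by
  subst hU
  refine ⟨fun j hji a b ⟨x, hux, hvx, ha⟩ ⟨y, huy, hvy, hb⟩ => ?_,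
    fun a => ⟨?_, ?_⟩⟩
  · exact hct.decomp.eq_of_mem_bags (P j).tree.connected.preconnected
      ((Hom.ofLE hG'.le).comp (D.embHom j)) (K := {D.emb i u, D.emb i v})
      (fun x hx _ _ ha hb => hG'.eq_of_mem_clique_of_ne (hct.bagMax x).1 he hu hv
        (hx (by simp)) (hx (by simp)) hji ha hb)
      (by simp [Set.insert_subset_iff, hux, hvx]) (by simp [Set.insert_subset_iff, huy, hvy]) ha hb
  · rintro ⟨x, hux, hvx, ha⟩
    exact hG'.eq_or_eq_of_mem_clique (hct.bagMax x).1 he hu hv hux hvx ha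
  · obtain ⟨x, hux, hvx⟩ := hct.decomp.edgeCover (hG'.le (D.adj_emb he))
    rintro (rfl | rfl)
    exacts [⟨x, hux, hvx, hux⟩, ⟨x, hux, hvx, hvx⟩]
end
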